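/- Theorem 1.2 (Hölder estimate): In an augmented tree induced by Φ satisfying (A1) and (A2), there is a constant C > 0 such that for any two geodesic rays (x_n) and (y_n) with ⋂_{n≥0} Φ(x_n) = {a} and ⋂_{n≥0} Φ(y_n) = {b} and a ≠ b, setting m = liminf_{n→∞} |x_n ∧ y_n| (which is finite), one has C⁻¹ |a − b| ≤ r^m ≤ C |a − b|, where |·| on the right of r^m denotes the Euclidean distance in ℝ^d. -/

import Mathlib

open Metric Filter

namespace HypIFS

/-- A rooted tree: a connected, locally finite simple graph with no cycles
and a distinguished root. -/
structure RootedTree (X : Type*) where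
  G : SimpleGraph X
  isTree : G.IsTree
  locFin : ∀ x : X, {y | G.Adj x y}.Finite
  root : X

variable {X : Type*}

/-- the level `|x|` of a vertex: graph distance from the root. -/
noncomputable def lvl (T : RootedTree X) (x : X) : ℕ := T.G.dist T.root x

/-- `p` is the parent `x⁻¹` of `x`. -/
def IsParent (T : RootedTree X) (p x : X) : Prop :=
  T.G.Adj p x ∧ lvl T p + 1 = lvl T x

/-- The graph `(X, 𝓔_v ∪ 𝓔_h)`. -/
def augGraph (T : RootedTree X) (Eh : X → X → Prop) : SimpleGraph X where
  Adj x y := (T.G.Adj x y ∨ Eh x y ∨ Eh y x) ∧ x ≠ y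
  symm := ⟨by
    rintro x y ⟨h1 | h2 | h3, hne⟩
    · exact ⟨Or.inl h1.symm, hne.symm⟩
    · exact ⟨Or.inr (Or.inr h2), hne.symm⟩
    · exact ⟨Or.inr (Or.inl h3), hne.symm⟩⟩
  loopless := ⟨fun x h => h.2 rfl⟩

/-- The Gromov product `|x ∧ y| = ½(|x| + |y| − d(x,y))` with respect to a root `o`. -/
noncomputable def gprod {V : Type*} (G : SimpleGraph V) (o x y : V) : ℝ :=
  ((G.dist o x : ℝ) + (G.dist o y : ℝ) - (G.dist x y : ℝ)) / 2

/-- Gromov hyperbolicity of a graph with basepoint `o`. -/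
def GromovHyperbolic {V : Type*} (G : SimpleGraph V) (o : V) : Prop :=
  ∃ δ : ℝ, 0 ≤ δ ∧ ∀ x y z : V,
    min (gprod G o x z) (gprod G o z y) - δ ≤ gprod G o x y

/-- The distance `dist(A, B)` between two subsets of a metric space. -/
noncomputable def setDist {E : Type*} [PseudoMetricSpace E] (A B : Set E) : ℝ :=
  sInf (Set.image2 dist A B)

/-- The horizontal edge set `𝓔_h` induced by the set-valued map `Φ`:
`(x,y) ∈ 𝓔_h` iff `|x| = |y|`, `x ≠ y` and `dist(Φ(x), Φ(y)) ≤ κ r^{|x|}`. -/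
def EhPhi {d : ℕ} (T : RootedTree X) (Φ : X → Set (EuclideanSpace ℝ (Fin d)))
    (r κ : ℝ) (x y : X) : Prop :=
  lvl T x = lvl T y ∧ x ≠ y ∧ setDist (Φ x) (Φ y) ≤ κ * r ^ lvl T x

/-- A geodesic ray: `x 0` is the root, `|x n| = n`, and consecutive vertices are
joined by vertical (tree) edges. -/
def IsGeodesicRay (T : RootedTree X) (x : ℕ → X) : Prop :=
  x 0 = T.root ∧ ∀ n : ℕ, lvl T (x n) = n ∧ T.G.Adj (x n) (x (n + 1))

/-! A geodesic from `xₙ` to `yₙ` in the augmented graph has length `kₙ = 2(n - |xₙ ∧ yₙ|)`, and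
along it the levels drop by at most one per step, so its `i`-th vertex lies at level at least
`n - min(i, kₙ - i)`. Chaining points of the sets `Φ` along each half of the geodesic, every edge
at level `j` moves by `O(rʲ)`, and the geometric series gives `|a - b| = O(r^{n - kₙ/2})`.
Conversely, at the largest level `ℓ` with `|a - b| ≤ κ rˡ` the vertices `x_ℓ`, `y_ℓ` coincide or
are joined by a horizontal edge, so `d(xₙ, yₙ) ≤ 2(n - ℓ) + 1` and `|xₙ ∧ yₙ| ≥ ℓ - 1/2`. -/

open SimpleGraph (Walk dist_eq_one_iff_adj)

lemma lvl_root (T : RootedTree X) : lvl T T.root = 0 := SimpleGraph.dist_self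

lemma isParent_or_isParent_of_adj (T : RootedTree X) {u v : X} (h : T.G.Adj u v) :
    IsParent T u v ∨ IsParent T v u := by
  rcases T.isTree.dist_eq_dist_add_one_of_adj T.root h with h' | h'
  · exact Or.inr ⟨h.symm, h'.symm⟩
  · exact Or.inl ⟨h, h'.symm⟩

section AugmentedGraph

variable {T : RootedTree X} {Eh : X → X → Prop}

lemma augGraph_adj_of_adj {u v : X} (h : T.G.Adj u v) : (augGraph T Eh).Adj u v :=
  ⟨Or.inl h, h.ne⟩

variable (T Eh) in
lemma augGraph_connected : (augGraph T Eh).Connected :=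
  T.isTree.connected.mono fun _ _ => augGraph_adj_of_adj

lemma lvl_le_lvl_add_one_of_augGraph_adj (hEh : ∀ u v, Eh u v → lvl T u = lvl T v) {u v : X}
    (h : (augGraph T Eh).Adj u v) : lvl T v ≤ lvl T u + 1 := by
  obtain ⟨hT | hE | hE, -⟩ := h
  · rcases isParent_or_isParent_of_adj T hT with hp | hp <;> have := hp.2 <;> omega
  · rw [hEh _ _ hE]; omega
  · rw [hEh _ _ hE]; omega

lemma lvl_le_lvl_add_length (hEh : ∀ u v, Eh u v → lvl T u = lvl T v) {u v : X}
    (W : (augGraph T Eh).Walk u v) : lvl T v ≤ lvl T u + W.length := by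
  induction W with
  | nil => simp
  | cons h _ ih =>
    have := lvl_le_lvl_add_one_of_augGraph_adj hEh h
    rw [Walk.length_cons]; omega

lemma lvl_le_augGraph_dist_root (hEh : ∀ u v, Eh u v → lvl T u = lvl T v) (v : X) :
    lvl T v ≤ (augGraph T Eh).dist T.root v := by
  obtain ⟨W, hW⟩ := (augGraph_connected T Eh T.root v).exists_walk_length_eq_dist
  simpa [lvl_root, hW] using lvl_le_lvl_add_length hEh W

variable {x y : ℕ → X}

lemma IsGeodesicRay.augGraph_dist_le (hx : IsGeodesicRay T x) (i k : ℕ) :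
    (augGraph T Eh).dist (x i) (x (i + k)) ≤ k := by
  induction k with
  | zero => simp
  | succ k ih =>
    have hstep : (augGraph T Eh).dist (x (i + k)) (x (i + k + 1)) = 1 :=
      dist_eq_one_iff_adj.mpr (augGraph_adj_of_adj (hx.2 (i + k)).2)
    have := (augGraph_connected T Eh).dist_triangle (u := x i) (v := x (i + k)) (w := x (i + k + 1))
    rw [← add_assoc]; omega

lemma IsGeodesicRay.augGraph_dist_root (hEh : ∀ u v, Eh u v → lvl T u = lvl T v)
    (hx : IsGeodesicRay T x) (n : ℕ) : (augGraph T Eh).dist T.root (x n) = n := by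
  refine le_antisymm ?_ ?_
  · simpa [hx.1] using hx.augGraph_dist_le (Eh := Eh) 0 n
  · simpa [(hx.2 n).1] using lvl_le_augGraph_dist_root hEh (x n)

lemma gprod_of_isGeodesicRay (hEh : ∀ u v, Eh u v → lvl T u = lvl T v)
    (hx : IsGeodesicRay T x) (hy : IsGeodesicRay T y) (n : ℕ) :
    gprod (augGraph T Eh) T.root (x n) (y n) = n - (augGraph T Eh).dist (x n) (y n) / 2 := by
  rw [gprod, hx.augGraph_dist_root hEh, hy.augGraph_dist_root hEh]; ring

lemma le_gprod_of_augGraph_dist_le (hEh : ∀ u v, Eh u v → lvl T u = lvl T v)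
    (hx : IsGeodesicRay T x) (hy : IsGeodesicRay T y) {ℓ e : ℕ}
    (he : (augGraph T Eh).dist (x ℓ) (y ℓ) ≤ e) {n : ℕ} (hn : ℓ ≤ n) :
    (ℓ : ℝ) - e / 2 ≤ gprod (augGraph T Eh) T.root (x n) (y n) := by
  obtain ⟨k, rfl⟩ := Nat.exists_eq_add_of_le hn
  have hdist : (augGraph T Eh).dist (x (ℓ + k)) (y (ℓ + k)) ≤ k + e + k := by
    have h₁ := (augGraph_connected T Eh).dist_triangle (u := x (ℓ + k)) (v := x ℓ) (w := y (ℓ + k))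
    have h₂ := (augGraph_connected T Eh).dist_triangle (u := x ℓ) (v := y ℓ) (w := y (ℓ + k))
    have hx' := hx.augGraph_dist_le (Eh := Eh) ℓ k
    have hy' := hy.augGraph_dist_le (Eh := Eh) ℓ k
    rw [SimpleGraph.dist_comm] at hx'
    omega
  rw [gprod_of_isGeodesicRay hEh hx hy]
  have : ((augGraph T Eh).dist (x (ℓ + k)) (y (ℓ + k)) : ℝ) ≤ k + e + k := by exact_mod_cast hdist
  push_cast
  linarith

lemma gprod_nonneg_of_isGeodesicRay (hEh : ∀ u v, Eh u v → lvl T u = lvl T v)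
    (hx : IsGeodesicRay T x) (hy : IsGeodesicRay T y) (n : ℕ) :
    0 ≤ gprod (augGraph T Eh) T.root (x n) (y n) := by
  simpa using le_gprod_of_augGraph_dist_le hEh hx hy (ℓ := 0) (e := 0) (by simp [hx.1, hy.1])
    n.zero_le

end AugmentedGraph

section SetDist

variable {E : Type*} [PseudoMetricSpace E] {A B : Set E}

lemma setDist_le_dist {a b : E} (ha : a ∈ A) (hb : b ∈ B) : setDist A B ≤ dist a b :=
  csInf_le ⟨0, by rintro _ ⟨p, -, q, -, rfl⟩; exact dist_nonneg⟩ (Set.mem_image2_of_mem ha hb)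

lemma setDist_comm (A B : Set E) : setDist A B = setDist B A := by
  rw [setDist, setDist, Set.image2_swap]
  simp only [dist_comm]

lemma setDist_nonpos_of_subset (hA : A.Nonempty) (h : A ⊆ B) : setDist A B ≤ 0 := by
  obtain ⟨a, ha⟩ := hA
  simpa using setDist_le_dist ha (h ha)

lemma dist_le_diam_add_setDist_add_diam (hA : Bornology.IsBounded A)
    (hB : Bornology.IsBounded B) {p q : E} (hp : p ∈ A) (hq : q ∈ B) :
    dist p q ≤ diam A + setDist A B + diam B := by
  suffices dist p q - diam A - diam B ≤ setDist A B by linarith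
  refine le_csInf (Set.Nonempty.image2 ⟨p, hp⟩ ⟨q, hq⟩) ?_
  rintro _ ⟨u, hu, w, hw, rfl⟩
  have := dist_triangle4 p u w q
  have := dist_le_diam_of_mem hA hp hu
  have := dist_le_diam_of_mem hB hw hq
  linarith

end SetDist

lemma bddAbove_and_le_rpow_liminf {r t : ℝ} (hr0 : 0 < r) (hr1 : r < 1) (ht : 0 < t) {g : ℕ → ℝ}
    (hg : BddBelow (Set.range g)) (h : ∀ n, t ≤ r ^ g n) :
    BddAbove (Set.range g) ∧ t ≤ r ^ liminf g atTop := by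
  have hle : ∀ n, g n ≤ Real.logb r t := fun n => by
    rw [← Real.rpow_le_rpow_left_iff_of_base_lt_one hr0 hr1, Real.rpow_logb hr0 hr1.ne ht]
    exact h n
  refine ⟨⟨_, Set.forall_mem_range.mpr hle⟩, ?_⟩
  calc t = r ^ Real.logb r t := (Real.rpow_logb hr0 hr1.ne ht).symm
    _ ≤ r ^ liminf g atTop := Real.rpow_le_rpow_of_exponent_ge hr0 hr1.le
      (liminf_le_of_frequently_le (.of_forall hle) hg.isBoundedUnder_of_range)

lemma rpow_liminf_le {r s : ℝ} (hr0 : 0 < r) (hr1 : r < 1) {g : ℕ → ℝ}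
    (hg : BddAbove (Set.range g)) (h : ∀ᶠ n in atTop, s ≤ g n) : r ^ liminf g atTop ≤ r ^ s :=
  Real.rpow_le_rpow_of_exponent_ge hr0 hr1.le
    (le_liminf_of_le hg.isBoundedUnder_of_range.isCoboundedUnder_ge h)

/-- (A1) together with the upper half of (A2), for nonempty bounded sets. -/
structure IsNestedShrinking {E : Type*} [PseudoMetricSpace E] (T : RootedTree X)
    (Φ : X → Set E) (δ₀ r : ℝ) : Prop where
  nonempty : ∀ x, (Φ x).Nonempty
  isBounded : ∀ x, Bornology.IsBounded (Φ x)
  subset_of_isParent : ∀ p x, IsParent T p x → Φ x ⊆ Φ p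
  diam_le : ∀ x, diam (Φ x) ≤ δ₀ * r ^ lvl T x

lemma IsNestedShrinking.nonneg {E : Type*} [PseudoMetricSpace E] {T : RootedTree X}
    {Φ : X → Set E} {δ₀ r : ℝ} (hΦ : IsNestedShrinking T Φ δ₀ r) : 0 ≤ δ₀ := by
  simpa [lvl_root] using diam_nonneg.trans (hΦ.diam_le T.root)

section Holder

variable {d : ℕ} {T : RootedTree X} {Φ : X → Set (EuclideanSpace ℝ (Fin d))} {δ₀ r κ : ℝ}

lemma dist_le_of_augGraph_adj (hΦ : IsNestedShrinking T Φ δ₀ r) (hr0 : 0 ≤ r) (hr1 : r ≤ 1)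
    (hκ : 0 ≤ κ) {u v : X} (h : (augGraph T (EhPhi T Φ r κ)).Adj u v)
    {p q : EuclideanSpace ℝ (Fin d)} (hp : p ∈ Φ u) (hq : q ∈ Φ v) :
    dist p q ≤ (2 * δ₀ + κ) * r ^ min (lvl T u) (lvl T v) := by
  have hsetDist : setDist (Φ u) (Φ v) ≤ κ * r ^ min (lvl T u) (lvl T v) := by
    obtain ⟨hT | hE | hE, -⟩ := h
    · refine le_trans ?_ (by positivity : (0 : ℝ) ≤ _)
      rcases isParent_or_isParent_of_adj T hT with hpar | hpar
      · rw [setDist_comm]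
        exact setDist_nonpos_of_subset (hΦ.nonempty v) (hΦ.subset_of_isParent _ _ hpar)
      · exact setDist_nonpos_of_subset (hΦ.nonempty u) (hΦ.subset_of_isParent _ _ hpar)
    · simpa [hE.1] using hE.2.2
    · simpa [setDist_comm, hE.1] using hE.2.2
  have hdiam : ∀ w, lvl T w = lvl T u ∨ lvl T w = lvl T v →
      diam (Φ w) ≤ δ₀ * r ^ min (lvl T u) (lvl T v) := fun w hw =>
    (hΦ.diam_le w).trans <| mul_le_mul_of_nonneg_left
      (pow_le_pow_of_le_one hr0 hr1 (by omega)) hΦ.nonneg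
  calc dist p q ≤ diam (Φ u) + setDist (Φ u) (Φ v) + diam (Φ v) :=
        dist_le_diam_add_setDist_add_diam (hΦ.isBounded u) (hΦ.isBounded v) hp hq
    _ ≤ δ₀ * r ^ min (lvl T u) (lvl T v) + κ * r ^ min (lvl T u) (lvl T v)
        + δ₀ * r ^ min (lvl T u) (lvl T v) := by
      gcongr
      exacts [hdiam u (.inl rfl), hdiam v (.inr rfl)]
    _ = (2 * δ₀ + κ) * r ^ min (lvl T u) (lvl T v) := by ring

/-- Counted from the endpoint `u`, the `t`-th edge of the walk lies at level at least
`lvl u - t`, so the contributions of the edges form a geometric series dominated by its last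
term. -/
lemma dist_le_of_walk (hΦ : IsNestedShrinking T Φ δ₀ r) (hr0 : 0 < r) (hr1 : r < 1)
    (hκ : 0 ≤ κ) {v u : X} (W : (augGraph T (EhPhi T Φ r κ)).Walk v u)
    {p q : EuclideanSpace ℝ (Fin d)} (hp : p ∈ Φ v) (hq : q ∈ Φ u) :
    dist p q ≤ (2 * δ₀ + κ) / (1 - r) * r ^ ((lvl T u : ℤ) - W.length) := by
  have hEh : ∀ u v, EhPhi T Φ r κ u v → lvl T u = lvl T v := fun _ _ h => h.1
  have h1r : 0 < 1 - r := by linarith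
  have hδ₀ := hΦ.nonneg
  induction W generalizing p with
  | @nil u =>
    calc dist p q ≤ δ₀ * r ^ lvl T u := (dist_le_diam_of_mem (hΦ.isBounded _) hp hq).trans
          (hΦ.diam_le _)
      _ ≤ (2 * δ₀ + κ) / (1 - r) * r ^ lvl T u := by
        gcongr
        rw [le_div_iff₀ h1r]
        nlinarith
      _ = _ := by simp
  | @cons v w u h W ih =>
    obtain ⟨z, hz⟩ := hΦ.nonempty w
    have hlvl : (lvl T u : ℤ) - (W.length + 1) ≤ min (lvl T v) (lvl T w) := by
      have := lvl_le_lvl_add_length hEh W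
      have := lvl_le_lvl_add_one_of_augGraph_adj hEh h
      omega
    have hedge : r ^ min (lvl T v) (lvl T w) ≤ r ^ ((lvl T u : ℤ) - (W.length + 1)) := by
      rw [← zpow_natCast]
      exact zpow_le_zpow_right_of_le_one₀ hr0 hr1.le (by exact_mod_cast hlvl)
    have hstep : r ^ ((lvl T u : ℤ) - W.length) = r * r ^ ((lvl T u : ℤ) - (W.length + 1)) := by
      rw [← zpow_one_add₀ hr0.ne']; ring_nf
    calc dist p q ≤ dist p z + dist z q := dist_triangle _ _ _
      _ ≤ (2 * δ₀ + κ) * r ^ ((lvl T u : ℤ) - (W.length + 1))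
          + (2 * δ₀ + κ) / (1 - r) * (r * r ^ ((lvl T u : ℤ) - (W.length + 1))) := by
        rw [← hstep]
        gcongr
        · exact (dist_le_of_augGraph_adj hΦ hr0.le hr1.le hκ h hp hz).trans (by gcongr)
        · exact ih hz hq
      _ = (2 * δ₀ + κ) / (1 - r) * r ^ ((lvl T u : ℤ) - (W.cons h).length) := by
        rw [Walk.length_cons]; push_cast; field_simp; ring

/-- Split a geodesic from `u` to `v` at its midpoint and apply `dist_le_of_walk` to both halves. -/
lemma dist_le_of_lvl_eq (hΦ : IsNestedShrinking T Φ δ₀ r) (hr0 : 0 < r) (hr1 : r < 1)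
    (hκ : 0 ≤ κ) {u v : X} {n : ℕ} (hu : lvl T u = n) (hv : lvl T v = n)
    {p q : EuclideanSpace ℝ (Fin d)} (hp : p ∈ Φ u) (hq : q ∈ Φ v) :
    dist p q ≤ 2 * ((2 * δ₀ + κ) / (1 - r)) *
      r ^ ((n : ℝ) - ((augGraph T (EhPhi T Φ r κ)).dist u v + 1) / 2) := by
  obtain ⟨W, hW⟩ := (augGraph_connected T (EhPhi T Φ r κ) u v).exists_walk_length_eq_dist
  set j := W.length / 2
  obtain ⟨z, hz⟩ := hΦ.nonempty (W.getVert j)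
  have hhalf : ∀ i : ℕ, 2 * i ≤ W.length + 1 →
      r ^ ((n : ℤ) - i) ≤ r ^ ((n : ℝ) - ((augGraph T (EhPhi T Φ r κ)).dist u v + 1) / 2) := by
    intro i hi
    rw [← Real.rpow_intCast]
    refine Real.rpow_le_rpow_of_exponent_ge hr0 hr1.le ?_
    have : (2 * i : ℝ) ≤ W.length + 1 := by exact_mod_cast hi
    rw [← hW]; push_cast; linarith
  have hzp := dist_le_of_walk hΦ hr0 hr1 hκ (W.take j).reverse hz hp
  have hzq := dist_le_of_walk hΦ hr0 hr1 hκ (W.drop j) hz hq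
  rw [Walk.length_reverse, Walk.take_length, min_eq_left (Nat.div_le_self _ _), hu] at hzp
  rw [Walk.drop_length, hv, Nat.cast_sub (Nat.div_le_self _ _)] at hzq
  have hc : 0 ≤ (2 * δ₀ + κ) / (1 - r) := div_nonneg (by linarith [hΦ.nonneg]) (by linarith)
  calc dist p q ≤ dist z p + dist z q := dist_triangle_left _ _ _
    _ ≤ _ := by
      have h₁ := mul_le_mul_of_nonneg_left (hhalf j (by omega)) hc
      have h₂ := mul_le_mul_of_nonneg_left (hhalf (W.length - j) (by omega)) hc
      rw [Nat.cast_sub (Nat.div_le_self _ _)] at h₂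
      linarith

variable {x y : ℕ → X} {a b : EuclideanSpace ℝ (Fin d)}

lemma dist_le_rpow_gprod (hΦ : IsNestedShrinking T Φ δ₀ r) (hr0 : 0 < r) (hr1 : r < 1)
    (hκ : 0 ≤ κ) (hx : IsGeodesicRay T x) (hy : IsGeodesicRay T y) (ha : ∀ n, a ∈ Φ (x n))
    (hb : ∀ n, b ∈ Φ (y n)) (n : ℕ) :
    dist a b ≤ 2 * ((2 * δ₀ + κ) / (1 - r)) * r ^ (-(1 / 2 : ℝ)) *
      r ^ gprod (augGraph T (EhPhi T Φ r κ)) T.root (x n) (y n) := by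
  rw [gprod_of_isGeodesicRay (fun _ _ h => h.1) hx hy, mul_assoc, ← Real.rpow_add hr0]
  convert dist_le_of_lvl_eq hΦ hr0 hr1 hκ (hx.2 n).1 (hy.2 n).1 (ha n) (hb n) using 3
  ring

lemma augGraph_dist_le_one_of_setDist_le {u v : X} (hlvl : lvl T u = lvl T v)
    (h : setDist (Φ u) (Φ v) ≤ κ * r ^ lvl T u) : (augGraph T (EhPhi T Φ r κ)).dist u v ≤ 1 := by
  by_cases huv : u = v
  · simp [huv]
  · have hadj : (augGraph T (EhPhi T Φ r κ)).Adj u v := ⟨Or.inr (Or.inl ⟨hlvl, huv, h⟩), huv⟩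
    exact (dist_eq_one_iff_adj.mpr hadj).le

/-- `ℓ` is the first level with `κ rˡ < |a - b|`: at level `ℓ - 1` the rays are at distance at
most one, whence the `3/2`. -/
lemma exists_le_gprod (hr0 : 0 < r) (hr1 : r < 1) (hκ : 0 < κ) (hx : IsGeodesicRay T x)
    (hy : IsGeodesicRay T y) (ha : ∀ n, a ∈ Φ (x n)) (hb : ∀ n, b ∈ Φ (y n))
    (hab : 0 < dist a b) :
    ∃ ℓ : ℕ, κ * r ^ ℓ < dist a b ∧ ∀ n, ℓ ≤ n →
      (ℓ : ℝ) - 3 / 2 ≤ gprod (augGraph T (EhPhi T Φ r κ)) T.root (x n) (y n) := by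
  classical
  have hEh : ∀ u v, EhPhi T Φ r κ u v → lvl T u = lvl T v := fun _ _ h => h.1
  have hex : ∃ ℓ : ℕ, κ * r ^ ℓ < dist a b := by
    obtain ⟨ℓ, hℓ⟩ := exists_pow_lt_of_lt_one (div_pos hab hκ) hr1
    exact ⟨ℓ, (lt_div_iff₀' hκ).mp hℓ⟩
  obtain ⟨ℓ, hℓ, hmin⟩ : ∃ ℓ : ℕ, κ * r ^ ℓ < dist a b ∧ ∀ j < ℓ, dist a b ≤ κ * r ^ j :=
    ⟨Nat.find hex, Nat.find_spec hex, fun j hj => not_lt.mp (Nat.find_min hex hj)⟩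
  refine ⟨ℓ, hℓ, fun n hn => ?_⟩
  cases ℓ with
  | zero =>
    have := gprod_nonneg_of_isGeodesicRay hEh hx hy n
    push_cast
    linarith
  | succ j =>
    have hxj := (hx.2 j).1
    have hclose : (augGraph T (EhPhi T Φ r κ)).dist (x j) (y j) ≤ 1 := by
      refine augGraph_dist_le_one_of_setDist_le (hxj.trans (hy.2 j).1.symm) ?_
      rw [hxj]
      exact (setDist_le_dist (ha j) (hb j)).trans (hmin j j.lt_succ_self)
    have := le_gprod_of_augGraph_dist_le hEh hx hy hclose (by omega : j ≤ n)
    push_cast at this ⊢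
    linarith

end Holder

theorem holder_estimate_general {d : ℕ} (T : RootedTree X)
    (Φ : X → Set (EuclideanSpace ℝ (Fin d))) (δ₀ r κ : ℝ)
    (hr0 : 0 < r) (hr1 : r < 1) (hκ : 0 < κ)
    (hΦc : ∀ x, IsCompact (Φ x)) (hΦne : ∀ x, (Φ x).Nonempty)
    (hA1 : ∀ p x, IsParent T p x → Φ x ⊆ Φ p)
    (hA2 : ∀ x, δ₀⁻¹ * r ^ lvl T x ≤ diam (Φ x) ∧ diam (Φ x) ≤ δ₀ * r ^ lvl T x) :
    ∃ C : ℝ, 0 < C ∧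
      ∀ (x y : ℕ → X) (a b : EuclideanSpace ℝ (Fin d)),
        IsGeodesicRay T x → IsGeodesicRay T y →
        (⋂ n : ℕ, Φ (x n)) = {a} → (⋂ n : ℕ, Φ (y n)) = {b} → a ≠ b →
        BddAbove (Set.range fun n : ℕ =>
          gprod (augGraph T (EhPhi T Φ r κ)) T.root (x n) (y n)) ∧
        C⁻¹ * dist a b ≤
          Real.rpow r (Filter.liminf (fun n : ℕ =>
            gprod (augGraph T (EhPhi T Φ r κ)) T.root (x n) (y n)) Filter.atTop) ∧
        Real.rpow r (Filter.liminf (fun n : ℕ =>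
            gprod (augGraph T (EhPhi T Φ r κ)) T.root (x n) (y n)) Filter.atTop) ≤
          C * dist a b := by
  have hΦ : IsNestedShrinking T Φ δ₀ r :=
    ⟨hΦne, fun x => (hΦc x).isBounded, hA1, fun x => (hA2 x).2⟩
  set C₁ := 2 * ((2 * δ₀ + κ) / (1 - r)) * r ^ (-(1 / 2 : ℝ))
  set C₂ := r ^ (-(3 / 2 : ℝ)) / κ
  have hC₁ : 0 < C₁ := by
    have := hΦ.nonneg
    have : 0 < 1 - r := by linarith
    positivity
  refine ⟨max C₁ C₂, lt_max_of_lt_left hC₁, fun x y a b hx hy hxa hyb hab => ?_⟩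
  have ha : ∀ n, a ∈ Φ (x n) := Set.mem_iInter.mp (hxa ▸ rfl)
  have hb : ∀ n, b ∈ Φ (y n) := Set.mem_iInter.mp (hyb ▸ rfl)
  have hdab : 0 < dist a b := dist_pos.mpr hab
  simp only [Real.rpow_eq_pow]
  obtain ⟨hbdd, hlower⟩ := bddAbove_and_le_rpow_liminf hr0 hr1 (div_pos hdab hC₁)
    ⟨0, Set.forall_mem_range.mpr fun n => gprod_nonneg_of_isGeodesicRay (fun _ _ h => h.1) hx hy n⟩
    fun n => (div_le_iff₀' hC₁).mpr (dist_le_rpow_gprod hΦ hr0 hr1 hκ.le hx hy ha hb n)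
  obtain ⟨ℓ, hℓ, hgℓ⟩ := exists_le_gprod hr0 hr1 hκ hx hy ha hb hdab
  refine ⟨hbdd, ?_, ?_⟩
  · calc (max C₁ C₂)⁻¹ * dist a b ≤ C₁⁻¹ * dist a b := by gcongr; exact le_max_left _ _
      _ = dist a b / C₁ := inv_mul_eq_div _ _
      _ ≤ _ := hlower
  · calc _ ≤ r ^ ((ℓ : ℝ) - 3 / 2) := rpow_liminf_le hr0 hr1 hbdd (eventually_atTop.mpr ⟨ℓ, hgℓ⟩)
      _ = r ^ ℓ * r ^ (-(3 / 2 : ℝ)) := by rw [sub_eq_add_neg, Real.rpow_add hr0, Real.rpow_natCast]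
      _ ≤ dist a b / κ * r ^ (-(3 / 2 : ℝ)) := by gcongr; exact (le_div_iff₀' hκ).mpr hℓ.le
      _ = C₂ * dist a b := by ring
      _ ≤ max C₁ C₂ * dist a b := by gcongr; exact le_max_right _ _

/-- Theorem 1.2 (Hölder estimate): there is `C > 0` such that for geodesic rays
`(xₙ)`, `(yₙ)` with `⋂ₙ Φ(xₙ) = {a}`, `⋂ₙ Φ(yₙ) = {b}` and `a ≠ b`, the number
`m = liminfₙ |xₙ ∧ yₙ|` is finite and `C⁻¹ |a − b| ≤ r^m ≤ C |a − b|`. -/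
theorem holder_estimate {d : ℕ} (T : RootedTree X)
    (Φ : X → Set (EuclideanSpace ℝ (Fin d))) (δ₀ r κ : ℝ)
    (hδ₀ : 1 < δ₀) (hr0 : 0 < r) (hr1 : r < 1) (hκ : 0 < κ)
    (hΦc : ∀ x, IsCompact (Φ x)) (hΦne : ∀ x, (Φ x).Nonempty)
    (hA1 : ∀ p x, IsParent T p x → Φ x ⊆ Φ p)
    (hA2 : ∀ x, δ₀⁻¹ * r ^ lvl T x ≤ diam (Φ x) ∧ diam (Φ x) ≤ δ₀ * r ^ lvl T x) :
    ∃ C : ℝ, 0 < C ∧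
      ∀ (x y : ℕ → X) (a b : EuclideanSpace ℝ (Fin d)),
        IsGeodesicRay T x → IsGeodesicRay T y →
        (⋂ n : ℕ, Φ (x n)) = {a} → (⋂ n : ℕ, Φ (y n)) = {b} → a ≠ b →
        BddAbove (Set.range fun n : ℕ =>
          gprod (augGraph T (EhPhi T Φ r κ)) T.root (x n) (y n)) ∧
        C⁻¹ * dist a b ≤
          Real.rpow r (Filter.liminf (fun n : ℕ =>
            gprod (augGraph T (EhPhi T Φ r κ)) T.root (x n) (y n)) Filter.atTop) ∧
        Real.rpow r (Filter.liminf (fun n : ℕ =>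
            gprod (augGraph T (EhPhi T Φ r κ)) T.root (x n) (y n)) Filter.atTop) ≤
          C * dist a b :=
  holder_estimate_general T Φ δ₀ r κ hr0 hr1 hκ hΦc hΦne hA1 hA2

end HypIFS
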